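/- The weighted Poisson bracket of H_A and Im J vanishes identically on the half-plane phase space: {H_A, Im J} = 0, where Im J = κ_1 y_1 + κ_2 y_2 + κ_3 y_3; hence H_A and Im J are first integrals in involution of the half-plane three-vortex system. -/

import Mathlib

/-- Partial derivative of f : (Fin 3 → ℂ) → ℝ with respect to x_k = Re z_k. -/
noncomputable def pX (f : (Fin 3 → ℂ) → ℝ) (k : Fin 3) (z : Fin 3 → ℂ) : ℝ :=
  deriv (fun s : ℝ => f (Function.update z k ⟨s, (z k).im⟩)) ((z k).re)

/-- Partial derivative of f : (Fin 3 → ℂ) → ℝ with respect to y_k = Im z_k. -/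
noncomputable def pY (f : (Fin 3 → ℂ) → ℝ) (k : Fin 3) (z : Fin 3 → ℂ) : ℝ :=
  deriv (fun s : ℝ => f (Function.update z k ⟨(z k).re, s⟩)) ((z k).im)

/-- The weighted Poisson bracket
{f, g} := Σ_k κ_k⁻¹ (∂f/∂y_k ∂g/∂x_k − ∂f/∂x_k ∂g/∂y_k). -/
noncomputable def pbracket (κ : Fin 3 → ℝ) (f g : (Fin 3 → ℂ) → ℝ)
    (z : Fin 3 → ℂ) : ℝ :=
  ∑ k, (κ k)⁻¹ * (pY f k z * pX g k z - pX f k z * pY g k z)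

/-- The half-plane Hamiltonian
H_A = −Σ_{j<k} κ_j κ_k log|z_j − z_k| + Σ_{j≤k} κ_j κ_k log|z̄_j − z_k|. -/
noncomputable def HA (κ : Fin 3 → ℝ) (z : Fin 3 → ℂ) : ℝ :=
  -∑ p ∈ Finset.univ.filter (fun p : Fin 3 × Fin 3 => p.1 < p.2),
      κ p.1 * κ p.2 * Real.log ‖z p.1 - z p.2‖ +
    ∑ p ∈ Finset.univ.filter (fun p : Fin 3 × Fin 3 => p.1 ≤ p.2),
      κ p.1 * κ p.2 * Real.log ‖starRingEnd ℂ (z p.1) - z p.2‖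

lemma hdlog (c a b : ℝ) (s : ℝ) (h : (s - a)^2 + b^2 ≠ 0) :
    HasDerivAt (fun t : ℝ => c * Real.log (‖(⟨t - a, b⟩ : ℂ)‖))
      (c * ((s - a) / ((s - a)^2 + b^2))) s := by
  have h1 : HasDerivAt (fun t : ℝ => (t - a)^2 + b^2) (2*(s-a)) s := by
    simpa using ((((hasDerivAt_id' s).sub_const a).pow 2)).add_const (b^2)
  have h2 := h1.log h
  have h3 : (fun t : ℝ => c * Real.log (‖(⟨t - a, b⟩ : ℂ)‖))
      = fun t => c/2 * Real.log ((t-a)^2+b^2) := by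
    funext t
    rw [Complex.norm_def, show Complex.normSq ⟨t-a,b⟩ = (t-a)^2+b^2 from by
      simp [Complex.normSq_mk]; ring, Real.log_sqrt (by positivity)]
    ring
  rw [h3]
  rw [show c * ((s - a) / ((s - a)^2 + b^2)) = c/2 * (2 * (s - a) / ((s - a)^2 + b^2)) by ring]
  exact h2.const_mul (c/2)

lemma sep_ne {w v : ℂ} (h : w ≠ v) : ((w.re - v.re)^2 + (w.im - v.im)^2) ≠ 0 := by
  intro h0
  apply h
  have hre : (w.re - v.re)^2 = 0 :=
    le_antisymm (by nlinarith [sq_nonneg (w.im - v.im)]) (sq_nonneg _)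
  have him : (w.im - v.im)^2 = 0 :=
    le_antisymm (by nlinarith [sq_nonneg (w.re - v.re)]) (sq_nonneg _)
  exact Complex.ext (sub_eq_zero.mp (by nlinarith)) (sub_eq_zero.mp (by nlinarith))

lemma den_ne (u b : ℝ) (hb : b ≠ 0) : u^2 + b^2 ≠ 0 := by
  have : 0 < b^2 := lt_of_le_of_ne (sq_nonneg b) (Ne.symm (pow_ne_zero 2 hb))
  nlinarith [sq_nonneg u]

lemma pXg (κ : Fin 3 → ℝ) (z : Fin 3 → ℂ) (k : Fin 3) :
    pX (fun w => ∑ j, κ j * (w j).im) k z = 0 := by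
  have h : (fun s : ℝ => ∑ j, κ j * ((Function.update z k ⟨s, (z k).im⟩) j).im)
      = fun _ : ℝ => ∑ j, κ j * (z j).im := by
    funext s
    refine Finset.sum_congr rfl fun j _ => ?_
    rcases eq_or_ne j k with h|h
    · subst h; rw [Function.update_self]
    · rw [Function.update_of_ne h]
  simp only [pX]
  rw [h, deriv_const]

lemma pYg (κ : Fin 3 → ℝ) (z : Fin 3 → ℂ) (k : Fin 3) :
    pY (fun w => ∑ j, κ j * (w j).im) k z = κ k := by
  have h : (fun s : ℝ => ∑ j, κ j * ((Function.update z k ⟨(z k).re, s⟩) j).im)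
      = fun s : ℝ => κ k * s + ∑ j ∈ Finset.univ.erase k, κ j * (z j).im := by
    funext s
    rw [← Finset.sum_erase_add Finset.univ _ (Finset.mem_univ k), Function.update_self,
      Finset.sum_congr rfl (fun j hj => by rw [Function.update_of_ne (Finset.ne_of_mem_erase hj)])]
    ring
  simp only [pY]
  rw [h]
  have hd := (((hasDerivAt_id' ((z k).im)).const_mul (κ k)).add_const
    (∑ j ∈ Finset.univ.erase k, κ j * (z j).im)).deriv
  simpa using hd

/-- {H_A, Im J} = 0 at every point of the half-plane phase space, where
Im J = κ₁ y₁ + κ₂ y₂ + κ₃ y₃; hence H_A and Im J are first integrals in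
involution of the half-plane three-vortex system. -/
theorem bracket_HA_ImJ_eq_zero (κ : Fin 3 → ℝ) (hκ : ∀ k, κ k ≠ 0)
    (z : Fin 3 → ℂ) (him : ∀ k, 0 < (z k).im)
    (hsep : ∀ j k, j ≠ k → z j ≠ z k) :
    pbracket κ (HA κ) (fun w => ∑ k, κ k * (w k).im) z = 0 := by
  have hy0 := him 0; have hy1 := him 1; have hy2 := him 2
  -- denominator nonvanishing
  have hA01 := sep_ne (hsep 0 1 (by decide))
  have hA02 := sep_ne (hsep 0 2 (by decide))
  have hA10 := sep_ne (hsep 1 0 (by decide))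
  have hA12 := sep_ne (hsep 1 2 (by decide))
  have hA20 := sep_ne (hsep 2 0 (by decide))
  have hA21 := sep_ne (hsep 2 1 (by decide))
  have hB01 : ((z 0).re - (z 1).re)^2 + (-(z 0).im - (z 1).im)^2 ≠ 0 :=
    den_ne _ _ (by intro hh; linarith)
  have hB02 : ((z 0).re - (z 2).re)^2 + (-(z 0).im - (z 2).im)^2 ≠ 0 :=
    den_ne _ _ (by intro hh; linarith)
  have hB10 : ((z 1).re - (z 0).re)^2 + ((z 1).im + (z 0).im)^2 ≠ 0 :=
    den_ne _ _ (by intro hh; linarith)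
  have hB12 : ((z 1).re - (z 2).re)^2 + (-(z 1).im - (z 2).im)^2 ≠ 0 :=
    den_ne _ _ (by intro hh; linarith)
  have hB20 : ((z 2).re - (z 0).re)^2 + ((z 2).im + (z 0).im)^2 ≠ 0 :=
    den_ne _ _ (by intro hh; linarith)
  have hB21 : ((z 2).re - (z 1).re)^2 + ((z 2).im + (z 1).im)^2 ≠ 0 :=
    den_ne _ _ (by intro hh; linarith)
  -- k = 0
  have e0 : (fun t : ℝ => HA κ (Function.update z 0 ⟨t, (z 0).im⟩)) = fun t =>
      (-(κ 0 * κ 1 * Real.log (‖(⟨t - (z 1).re, (z 0).im - (z 1).im⟩ : ℂ)‖))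
        + -(κ 0 * κ 2 * Real.log (‖(⟨t - (z 2).re, (z 0).im - (z 2).im⟩ : ℂ)‖))
        + κ 0 * κ 1 * Real.log (‖(⟨t - (z 1).re, -(z 0).im - (z 1).im⟩ : ℂ)‖)
        + κ 0 * κ 2 * Real.log (‖(⟨t - (z 2).re, -(z 0).im - (z 2).im⟩ : ℂ)‖))
      + (-(κ 1 * κ 2 * Real.log (‖z 1 - z 2‖))
        + κ 0 * κ 0 * Real.log (‖(⟨0, -(2 * (z 0).im)⟩ : ℂ)‖)
        + κ 1 * κ 1 * Real.log (‖(starRingEnd ℂ) (z 1) - z 1‖)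
        + κ 1 * κ 2 * Real.log (‖(starRingEnd ℂ) (z 1) - z 2‖)
        + κ 2 * κ 2 * Real.log (‖(starRingEnd ℂ) (z 2) - z 2‖)) := by
    funext t
    simp [HA, Finset.sum_filter, Fintype.sum_prod_type, Fin.sum_univ_three,
      Function.update_self, Function.update_of_ne]
    rw [show ({ re := t, im := (z 0).im } : ℂ) - z 1
          = (⟨t - (z 1).re, (z 0).im - (z 1).im⟩ : ℂ) from by apply Complex.ext <;> simp,
      show ({ re := t, im := (z 0).im } : ℂ) - z 2
          = (⟨t - (z 2).re, (z 0).im - (z 2).im⟩ : ℂ) from by apply Complex.ext <;> simp,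
      show (starRingEnd ℂ) ({ re := t, im := (z 0).im } : ℂ) - { re := t, im := (z 0).im }
          = (⟨0, -(2 * (z 0).im)⟩ : ℂ) from by apply Complex.ext <;> simp <;> ring,
      show (starRingEnd ℂ) ({ re := t, im := (z 0).im } : ℂ) - z 1
          = (⟨t - (z 1).re, -(z 0).im - (z 1).im⟩ : ℂ) from by apply Complex.ext <;> simp,
      show (starRingEnd ℂ) ({ re := t, im := (z 0).im } : ℂ) - z 2
          = (⟨t - (z 2).re, -(z 0).im - (z 2).im⟩ : ℂ) from by apply Complex.ext <;> simp]
    ring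
  have px0 : pX (HA κ) 0 z =
      -(κ 0 * κ 1 * (((z 0).re - (z 1).re) / (((z 0).re - (z 1).re)^2 + ((z 0).im - (z 1).im)^2)))
      + -(κ 0 * κ 2 * (((z 0).re - (z 2).re) / (((z 0).re - (z 2).re)^2 + ((z 0).im - (z 2).im)^2)))
      + κ 0 * κ 1 * (((z 0).re - (z 1).re) / (((z 0).re - (z 1).re)^2 + (-(z 0).im - (z 1).im)^2))
      + κ 0 * κ 2 * (((z 0).re - (z 2).re) / (((z 0).re - (z 2).re)^2 + (-(z 0).im - (z 2).im)^2)) := by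
    simp only [pX]
    rw [e0]
    exact ((((((hdlog (κ 0 * κ 1) ((z 1).re) ((z 0).im - (z 1).im) ((z 0).re) hA01).neg).add
      ((hdlog (κ 0 * κ 2) ((z 2).re) ((z 0).im - (z 2).im) ((z 0).re) hA02).neg)).add
      (hdlog (κ 0 * κ 1) ((z 1).re) (-(z 0).im - (z 1).im) ((z 0).re) hB01)).add
      (hdlog (κ 0 * κ 2) ((z 2).re) (-(z 0).im - (z 2).im) ((z 0).re) hB02)).add_const _).deriv
  -- k = 1
  have e1 : (fun t : ℝ => HA κ (Function.update z 1 ⟨t, (z 1).im⟩)) = fun t =>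
      (-(κ 0 * κ 1 * Real.log (‖(⟨t - (z 0).re, (z 1).im - (z 0).im⟩ : ℂ)‖))
        + -(κ 1 * κ 2 * Real.log (‖(⟨t - (z 2).re, (z 1).im - (z 2).im⟩ : ℂ)‖))
        + κ 0 * κ 1 * Real.log (‖(⟨t - (z 0).re, (z 1).im + (z 0).im⟩ : ℂ)‖)
        + κ 1 * κ 2 * Real.log (‖(⟨t - (z 2).re, -(z 1).im - (z 2).im⟩ : ℂ)‖))
      + (-(κ 0 * κ 2 * Real.log (‖z 0 - z 2‖))
        + κ 0 * κ 0 * Real.log (‖(starRingEnd ℂ) (z 0) - z 0‖)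
        + κ 0 * κ 2 * Real.log (‖(starRingEnd ℂ) (z 0) - z 2‖)
        + κ 1 * κ 1 * Real.log (‖(⟨0, -(2 * (z 1).im)⟩ : ℂ)‖)
        + κ 2 * κ 2 * Real.log (‖(starRingEnd ℂ) (z 2) - z 2‖)) := by
    funext t
    simp [HA, Finset.sum_filter, Fintype.sum_prod_type, Fin.sum_univ_three,
      Function.update_self, Function.update_of_ne]
    rw [show z 0 - ({ re := t, im := (z 1).im } : ℂ)
          = -(⟨t - (z 0).re, (z 1).im - (z 0).im⟩ : ℂ) from by apply Complex.ext <;> simp <;> ring,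
      show ({ re := t, im := (z 1).im } : ℂ) - z 2
          = (⟨t - (z 2).re, (z 1).im - (z 2).im⟩ : ℂ) from by apply Complex.ext <;> simp,
      show (starRingEnd ℂ) (z 0) - ({ re := t, im := (z 1).im } : ℂ)
          = -(⟨t - (z 0).re, (z 1).im + (z 0).im⟩ : ℂ) from by apply Complex.ext <;> simp <;> ring,
      show (starRingEnd ℂ) ({ re := t, im := (z 1).im } : ℂ) - { re := t, im := (z 1).im }
          = (⟨0, -(2 * (z 1).im)⟩ : ℂ) from by apply Complex.ext <;> simp <;> ring,
      show (starRingEnd ℂ) ({ re := t, im := (z 1).im } : ℂ) - z 2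
          = (⟨t - (z 2).re, -(z 1).im - (z 2).im⟩ : ℂ) from by apply Complex.ext <;> simp,
      norm_neg, norm_neg]
    ring
  have px1 : pX (HA κ) 1 z =
      -(κ 0 * κ 1 * (((z 1).re - (z 0).re) / (((z 1).re - (z 0).re)^2 + ((z 1).im - (z 0).im)^2)))
      + -(κ 1 * κ 2 * (((z 1).re - (z 2).re) / (((z 1).re - (z 2).re)^2 + ((z 1).im - (z 2).im)^2)))
      + κ 0 * κ 1 * (((z 1).re - (z 0).re) / (((z 1).re - (z 0).re)^2 + ((z 1).im + (z 0).im)^2))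
      + κ 1 * κ 2 * (((z 1).re - (z 2).re) / (((z 1).re - (z 2).re)^2 + (-(z 1).im - (z 2).im)^2)) := by
    simp only [pX]
    rw [e1]
    exact ((((((hdlog (κ 0 * κ 1) ((z 0).re) ((z 1).im - (z 0).im) ((z 1).re) hA10).neg).add
      ((hdlog (κ 1 * κ 2) ((z 2).re) ((z 1).im - (z 2).im) ((z 1).re) hA12).neg)).add
      (hdlog (κ 0 * κ 1) ((z 0).re) ((z 1).im + (z 0).im) ((z 1).re) hB10)).add
      (hdlog (κ 1 * κ 2) ((z 2).re) (-(z 1).im - (z 2).im) ((z 1).re) hB12)).add_const _).deriv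
  -- k = 2
  have e2 : (fun t : ℝ => HA κ (Function.update z 2 ⟨t, (z 2).im⟩)) = fun t =>
      (-(κ 0 * κ 2 * Real.log (‖(⟨t - (z 0).re, (z 2).im - (z 0).im⟩ : ℂ)‖))
        + -(κ 1 * κ 2 * Real.log (‖(⟨t - (z 1).re, (z 2).im - (z 1).im⟩ : ℂ)‖))
        + κ 0 * κ 2 * Real.log (‖(⟨t - (z 0).re, (z 2).im + (z 0).im⟩ : ℂ)‖)
        + κ 1 * κ 2 * Real.log (‖(⟨t - (z 1).re, (z 2).im + (z 1).im⟩ : ℂ)‖))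
      + (-(κ 0 * κ 1 * Real.log (‖z 0 - z 1‖))
        + κ 0 * κ 0 * Real.log (‖(starRingEnd ℂ) (z 0) - z 0‖)
        + κ 0 * κ 1 * Real.log (‖(starRingEnd ℂ) (z 0) - z 1‖)
        + κ 1 * κ 1 * Real.log (‖(starRingEnd ℂ) (z 1) - z 1‖)
        + κ 2 * κ 2 * Real.log (‖(⟨0, -(2 * (z 2).im)⟩ : ℂ)‖)) := by
    funext t
    simp [HA, Finset.sum_filter, Fintype.sum_prod_type, Fin.sum_univ_three,
      Function.update_self, Function.update_of_ne]
    rw [show z 0 - ({ re := t, im := (z 2).im } : ℂ)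
          = -(⟨t - (z 0).re, (z 2).im - (z 0).im⟩ : ℂ) from by apply Complex.ext <;> simp <;> ring,
      show z 1 - ({ re := t, im := (z 2).im } : ℂ)
          = -(⟨t - (z 1).re, (z 2).im - (z 1).im⟩ : ℂ) from by apply Complex.ext <;> simp <;> ring,
      show (starRingEnd ℂ) (z 0) - ({ re := t, im := (z 2).im } : ℂ)
          = -(⟨t - (z 0).re, (z 2).im + (z 0).im⟩ : ℂ) from by apply Complex.ext <;> simp <;> ring,
      show (starRingEnd ℂ) (z 1) - ({ re := t, im := (z 2).im } : ℂ)
          = -(⟨t - (z 1).re, (z 2).im + (z 1).im⟩ : ℂ) from by apply Complex.ext <;> simp <;> ring,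
      show (starRingEnd ℂ) ({ re := t, im := (z 2).im } : ℂ) - { re := t, im := (z 2).im }
          = (⟨0, -(2 * (z 2).im)⟩ : ℂ) from by apply Complex.ext <;> simp <;> ring,
      norm_neg, norm_neg, norm_neg, norm_neg]
    ring
  have px2 : pX (HA κ) 2 z =
      -(κ 0 * κ 2 * (((z 2).re - (z 0).re) / (((z 2).re - (z 0).re)^2 + ((z 2).im - (z 0).im)^2)))
      + -(κ 1 * κ 2 * (((z 2).re - (z 1).re) / (((z 2).re - (z 1).re)^2 + ((z 2).im - (z 1).im)^2)))
      + κ 0 * κ 2 * (((z 2).re - (z 0).re) / (((z 2).re - (z 0).re)^2 + ((z 2).im + (z 0).im)^2))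
      + κ 1 * κ 2 * (((z 2).re - (z 1).re) / (((z 2).re - (z 1).re)^2 + ((z 2).im + (z 1).im)^2)) := by
    simp only [pX]
    rw [e2]
    exact ((((((hdlog (κ 0 * κ 2) ((z 0).re) ((z 2).im - (z 0).im) ((z 2).re) hA20).neg).add
      ((hdlog (κ 1 * κ 2) ((z 1).re) ((z 2).im - (z 1).im) ((z 2).re) hA21).neg)).add
      (hdlog (κ 0 * κ 2) ((z 0).re) ((z 2).im + (z 0).im) ((z 2).re) hB20)).add
      (hdlog (κ 1 * κ 2) ((z 1).re) ((z 2).im + (z 1).im) ((z 2).re) hB21)).add_const _).deriv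
  -- assemble
  have cancel : ∀ a b : ℝ, a ≠ 0 → a⁻¹ * -(b * a) = -b := by
    intro a b ha; field_simp
  simp only [pbracket, pXg, pYg, mul_zero, zero_sub]
  rw [Fin.sum_univ_three, px0, px1, px2, cancel _ _ (hκ 0), cancel _ _ (hκ 1), cancel _ _ (hκ 2)]
  ring
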